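/- arXiv:1302.3240 — 3 statements merged into one kernel-verified Lean document; each statement's English description precedes it below -/
import Mathlib

section
/- The minimum Hamming weight of a nonzero codeword of the binary Reed-Muller code RM(r,m) is 2^{m-r}. -/
open Finset

/-- The Hamming weight of a vector over `ZMod 2` indexed by a fintype. -/
def hamWt {ι : Type*} [Fintype ι] (v : ι → ZMod 2) : ℕ :=
  (Finset.univ.filter (fun i => v i ≠ 0)).card

/-- The Reed-Muller code `RM(r,m)`. -/
def RMcode (r m : ℕ) : Submodule (ZMod 2) ((Fin m → ZMod 2) → ZMod 2) :=
  Submodule.span (ZMod 2)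
    { c | ∃ S : Finset (Fin m), S.card ≤ r ∧ c = fun x => ∏ i ∈ S, x i }

/-!
Write a nonzero codeword as a sum of distinct monomials `x^S` with `#S ≤ r` and pick `T`
maximal among the `S`. Over a subcube in which exactly the coordinates in `T` are free, `x^S`
sums to `0` unless `T ⊆ S`, because a free coordinate outside `S` contributes the factor
`2 = 0`; hence the codeword sums to `1` over each of these `2 ^ (m - #T)` disjoint subcubes,
and each of them contains a point of its support.
-/

namespace ReedMuller

theorem zmod_two_ne_zero_iff {a : ZMod 2} : a ≠ 0 ↔ a = 1 := by
  revert a; decide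

theorem exists_finset_sum_eq_of_mem_span_image {ι M : Type*} [AddCommGroup M]
    [Module (ZMod 2) M] {v : ι → M} {s : Set ι} {x : M}
    (hx : x ∈ Submodule.span (ZMod 2) (v '' s)) :
    ∃ t : Finset ι, ↑t ⊆ s ∧ ∑ i ∈ t, v i = x := by
  obtain ⟨l, hls, rfl⟩ := (Finsupp.mem_span_image_iff_linearCombination _).1 hx
  rw [Finsupp.linearCombination_apply, Finsupp.sum]
  refine ⟨l.support, hls, sum_congr rfl fun i hi => ?_⟩
  rw [zmod_two_ne_zero_iff.1 (Finsupp.mem_support_iff.1 hi), one_smul]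

variable {σ : Type*}

def monomial (S : Finset σ) (x : σ → ZMod 2) : ZMod 2 := ∏ i ∈ S, x i

theorem monomial_ne_zero (S : Finset σ) : monomial S ≠ 0 := fun h => by
  simpa [monomial] using congr_fun h 1

theorem RMcode_eq_span_image (r m : ℕ) :
    RMcode r m = Submodule.span (ZMod 2) (monomial '' {S | #S ≤ r}) := by
  simp only [RMcode]
  congr 1
  ext c
  simp [monomial, eq_comm, funext_iff]

variable [Fintype σ] [DecidableEq σ]

theorem monomial_eq_prod_ite (S : Finset σ) (x : σ → ZMod 2) :
    monomial S x = ∏ i, if i ∈ S then x i else 1 := by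
  rw [prod_ite_mem, univ_inter, monomial]

theorem card_piFinset_ite_singleton (T : Finset σ) (a : ZMod 2) :
    #(Fintype.piFinset fun i => if i ∈ T then {a} else univ) = 2 ^ #Tᶜ := by
  simp_rw [Fintype.card_piFinset, apply_ite card, card_singleton, card_univ, ZMod.card,
    prod_ite, prod_const]
  simp [filter_not, compl_eq_univ_sdiff]

theorem hamWt_monomial (S : Finset σ) : hamWt (monomial S) = 2 ^ #Sᶜ := by
  rw [← card_piFinset_ite_singleton S 1, hamWt]
  congr 1
  ext x
  simp only [monomial, mem_filter, mem_univ, true_and, Fintype.mem_piFinset, prod_ne_zero_iff]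
  refine forall_congr' fun i => ?_
  split_ifs with hi
  · simp [hi, zmod_two_ne_zero_iff]
  · simp [hi]

def subcube (T : Finset σ) (z : σ → ZMod 2) : Finset (σ → ZMod 2) :=
  Fintype.piFinset fun i => if i ∈ T then univ else {z i}

theorem sum_subcube_monomial (S T : Finset σ) (z : σ → ZMod 2) :
    ∑ x ∈ subcube T z, monomial S x = if T ⊆ S then ∏ i ∈ S \ T, z i else 0 := by
  simp_rw [subcube, monomial_eq_prod_ite]
  rw [← prod_univ_sum (fun i => if i ∈ T then univ else {z i})
    (fun i a => if i ∈ S then a else 1)]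
  have hfactor : ∀ i, (∑ a ∈ (if i ∈ T then univ else {z i}), if i ∈ S then a else 1)
      = if i ∈ T then (if i ∈ S then 1 else 0) else (if i ∈ S then z i else 1) := by
    intro i
    split_ifs <;> first | decide | simp
  simp_rw [hfactor]
  split_ifs with hTS
  · rw [← univ_inter (S \ T), ← prod_ite_mem]
    refine prod_congr rfl fun i _ => ?_
    by_cases hiT : i ∈ T
    · simp [hiT, hTS hiT]
    · simp [hiT]
  · obtain ⟨i, hiT, hiS⟩ := not_subset.1 hTS
    exact prod_eq_zero (mem_univ i) (by simp [hiT, hiS])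

theorem sum_subcube_sum_monomial_of_maximal {𝒮 : Finset (Finset σ)} {T : Finset σ}
    (hT : Maximal (· ∈ 𝒮) T) (z : σ → ZMod 2) :
    ∑ x ∈ subcube T z, ∑ S ∈ 𝒮, monomial S x = 1 := by
  rw [sum_comm, sum_eq_single_of_mem T hT.prop]
  · simp [sum_subcube_monomial]
  · intro S hS hST
    rw [sum_subcube_monomial, if_neg fun hTS => hST (hT.eq_of_ge hS hTS)]

theorem exists_mem_subcube_sum_monomial_ne_zero {𝒮 : Finset (Finset σ)} {T : Finset σ}
    (hT : Maximal (· ∈ 𝒮) T) (z : σ → ZMod 2) :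
    ∃ x ∈ subcube T z, (∑ S ∈ 𝒮, monomial S) x ≠ 0 := by
  simp_rw [Finset.sum_apply]
  exact exists_ne_zero_of_sum_ne_zero (by simp [sum_subcube_sum_monomial_of_maximal hT z])

theorem two_pow_card_compl_le_hamWt {𝒮 : Finset (Finset σ)} {T : Finset σ}
    (hT : Maximal (· ∈ 𝒮) T) : 2 ^ #Tᶜ ≤ hamWt (∑ S ∈ 𝒮, monomial S) := by
  rw [← card_piFinset_ite_singleton T 0, hamWt]
  -- Zeroing the coordinates in `T` maps the support onto the points vanishing on `T`.
  refine card_le_card_of_surjOn (fun x i => if i ∈ T then 0 else x i) fun z hz => ?_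
  obtain ⟨x, hx, hcx⟩ := exists_mem_subcube_sum_monomial_ne_zero hT z
  refine ⟨x, by simpa using hcx, funext fun i => ?_⟩
  have hxi := Fintype.mem_piFinset.1 hx i
  have hzi := Fintype.mem_piFinset.1 (mem_coe.1 hz) i
  by_cases hiT : i ∈ T
  · simp only [hiT, if_true, mem_singleton] at hzi
    simp [hiT, hzi]
  · simpa [hiT] using hxi

end ReedMuller

open ReedMuller

/-- The minimum Hamming weight of a nonzero codeword of `RM(r,m)` is `2^(m-r)`. -/
theorem RM_min_weight (r m : ℕ) (hr : r ≤ m) :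
    (∃ c ∈ RMcode r m, c ≠ 0 ∧ hamWt c = 2 ^ (m - r)) ∧
      ∀ c ∈ RMcode r m, c ≠ 0 → 2 ^ (m - r) ≤ hamWt c := by
  rw [RMcode_eq_span_image]
  constructor
  · obtain ⟨S, -, hS⟩ := exists_subset_card_eq (s := (univ : Finset (Fin m))) (by simpa using hr)
    refine ⟨monomial S, Submodule.subset_span ⟨S, hS.le, rfl⟩, monomial_ne_zero S, ?_⟩
    rw [hamWt_monomial, card_compl, Fintype.card_fin, hS]
  · intro c hc hc0
    obtain ⟨𝒮, h𝒮, rfl⟩ := exists_finset_sum_eq_of_mem_span_image hc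
    obtain ⟨T, hT⟩ := exists_maximal (nonempty_of_sum_ne_zero hc0)
    calc 2 ^ (m - r) ≤ 2 ^ #Tᶜ := by
          rw [card_compl, Fintype.card_fin]
          exact Nat.pow_le_pow_right two_pos (Nat.sub_le_sub_left (h𝒮 hT.prop) m)
      _ ≤ hamWt (∑ S ∈ 𝒮, monomial S) := two_pow_card_compl_le_hamWt hT
end

section
/- The dual code of the binary Reed-Muller code RM(r,m) with respect to the standard bilinear form on GF(2)^{2^m} is RM(m-r-1, m). -/
open Finset

lemma zmod2_sq' : ∀ a : ZMod 2, a * a = a := by decide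
lemma zmod2_sq (a : ZMod 2) : a * a = a := zmod2_sq' a

lemma sum_monomial {m : ℕ} (S : Finset (Fin m)) :
    ∑ x : Fin m → ZMod 2, ∏ i ∈ S, x i = if S = univ then 1 else 0 := by
  have h1 : ∀ x : Fin m → ZMod 2, ∏ i ∈ S, x i
      = ∏ i : Fin m, (if i ∈ S then x i else 1) := by
    intro x
    rw [Finset.prod_ite_mem, univ_inter]
  simp_rw [h1]
  rw [← Fintype.piFinset_univ,
    Finset.sum_prod_piFinset (univ : Finset (ZMod 2)) (fun i a => if i ∈ S then a else 1)]
  have h2 : ∀ i : Fin m, (∑ j : ZMod 2, if i ∈ S then j else 1)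
      = if i ∈ S then 1 else 0 := by
    intro i
    by_cases h : i ∈ S <;> simp [h] <;> decide
  simp_rw [h2]
  by_cases h : S = univ
  · subst h; simp
  · rw [if_neg h]
    obtain ⟨i, hi⟩ : ∃ i, i ∉ S := by
      by_contra hc
      push_neg at hc
      exact h (eq_univ_iff_forall.mpr hc)
    exact Finset.prod_eq_zero (mem_univ i) (by simp [hi])

lemma monomial_mul {m : ℕ} (S T : Finset (Fin m)) (x : Fin m → ZMod 2) :
    (∏ i ∈ S, x i) * ∏ i ∈ T, x i = ∏ i ∈ S ∪ T, x i := by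
  have hsub : S ∩ T ⊆ S ∪ T := (inter_subset_left).trans subset_union_left
  rw [← Finset.prod_union_inter, ← Finset.prod_sdiff hsub, mul_assoc, zmod2_sq]

lemma gen_orth {m : ℕ} (S T : Finset (Fin m)) (h : S ∪ T ≠ univ) :
    ∑ x : Fin m → ZMod 2, (∏ i ∈ S, x i) * ∏ i ∈ T, x i = 0 := by
  simp_rw [monomial_mul]
  rw [sum_monomial, if_neg h]

lemma delta {m : ℕ} (x y : Fin m → ZMod 2) :
    ∏ i : Fin m, (y i + (x i + 1)) = if x = y then 1 else 0 := by
  by_cases h : x = y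
  · subst h
    rw [if_pos rfl]
    apply Finset.prod_eq_one
    intro i _
    have : ∀ a : ZMod 2, a + (a + 1) = 1 := by decide
    exact this _
  · rw [if_neg h]
    obtain ⟨i, hi⟩ : ∃ i, x i ≠ y i := by
      by_contra hc; push_neg at hc; exact h (funext hc)
    refine Finset.prod_eq_zero (mem_univ i) ?_
    revert hi
    have : ∀ a b : ZMod 2, a ≠ b → b + (a + 1) = 0 := by decide
    exact this _ _

/-- The dual of `RM(r,m)` with respect to the standard bilinear form on
`GF(2)^(2^m)` is `RM(m-r-1, m)`. -/
theorem RM_dual (r m : ℕ) (hr : r ≤ m - 1) (hm : 1 ≤ m) :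
    { w : (Fin m → ZMod 2) → ZMod 2 |
        ∀ c ∈ RMcode r m, ∑ x : Fin m → ZMod 2, w x * c x = 0 } =
      (RMcode (m - r - 1) m : Set ((Fin m → ZMod 2) → ZMod 2)) := by
  ext w
  simp only [Set.mem_setOf_eq, SetLike.mem_coe]
  constructor
  · -- dual ⊆ RM(m-r-1)
    intro hw
    -- ANF coefficients
    set a : Finset (Fin m) → ZMod 2 :=
      fun S => ∑ x : Fin m → ZMod 2, w x * ∏ i ∈ univ \ S, (x i + 1) with ha
    -- coefficients of high-degree monomials vanish
    have hvanish : ∀ S : Finset (Fin m), ¬ S.card ≤ m - r - 1 → a S = 0 := by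
      intro S hS
      rw [ha]
      have hexp : ∀ x : Fin m → ZMod 2, ∏ i ∈ univ \ S, (x i + 1)
          = ∑ t ∈ (univ \ S).powerset, ∏ i ∈ t, x i := by
        intro x
        rw [Finset.prod_add]
        simp
      simp_rw [hexp, Finset.mul_sum]
      rw [Finset.sum_comm]
      apply Finset.sum_eq_zero
      intro t ht
      apply hw
      apply Submodule.subset_span
      refine ⟨t, ?_, rfl⟩
      have h1 : t.card ≤ (univ \ S).card := Finset.card_le_card (mem_powerset.mp ht)
      have h2 : (univ \ S : Finset (Fin m)).card = m - S.card := by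
        rw [Finset.card_sdiff_of_subset (subset_univ S), Finset.card_univ, Fintype.card_fin]
      have h3 : S.card ≤ m := by
        simpa using Finset.card_le_card (subset_univ S)
      omega
    -- ANF identity
    have hANF : w = ∑ S ∈ (univ : Finset (Fin m)).powerset,
        a S • fun x => ∏ i ∈ S, x i := by
      funext y
      rw [Finset.sum_apply]
      simp only [Pi.smul_apply, smul_eq_mul, ha]
      simp_rw [Finset.sum_mul, mul_assoc]
      rw [Finset.sum_comm]
      have hinner : ∀ x : Fin m → ZMod 2,
          ∑ S ∈ (univ : Finset (Fin m)).powerset,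
            w x * ((∏ i ∈ univ \ S, (x i + 1)) * ∏ i ∈ S, y i)
          = w x * (if x = y then 1 else 0) := by
        intro x
        rw [← Finset.mul_sum, ← delta x y, Finset.prod_add]
        congr 1
        apply Finset.sum_congr rfl
        intro S _
        ring
      simp_rw [hinner]
      simp
    rw [hANF]
    apply Submodule.sum_mem
    intro S _
    by_cases hS : S.card ≤ m - r - 1
    · exact Submodule.smul_mem _ _ (Submodule.subset_span ⟨S, hS, rfl⟩)
    · rw [hvanish S hS, zero_smul]
      exact Submodule.zero_mem _
  · -- RM(m-r-1) ⊆ dual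
    intro hw c hc
    induction hw using Submodule.span_induction with
    | mem v hv =>
      obtain ⟨S, hS, rfl⟩ := hv
      induction hc using Submodule.span_induction with
      | mem u hu =>
        obtain ⟨T, hT, rfl⟩ := hu
        apply gen_orth
        intro hcon
        have h1 : (S ∪ T).card ≤ S.card + T.card := Finset.card_union_le S T
        have h2 : (S ∪ T).card = m := by rw [hcon, Finset.card_univ, Fintype.card_fin]
        omega
      | zero => simp
      | add u v _ _ h1 h2 => simp only [Pi.add_apply, mul_add, Finset.sum_add_distrib, h1, h2, add_zero]
      | smul t u _ h1 =>
        simp only [Pi.smul_apply, smul_eq_mul, mul_left_comm, ← Finset.mul_sum, h1, mul_zero]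
    | zero => simp
    | add u v _ _ h1 h2 => simp only [Pi.add_apply, add_mul, Finset.sum_add_distrib, h1, h2, add_zero]
    | smul t u _ h1 =>
      simp only [Pi.smul_apply, smul_eq_mul, mul_assoc, ← Finset.mul_sum, h1, mul_zero]
end

section
/- The Taylor expansion at ε = 0 of the distillation function f(ε) = [1 − (1−2ε)^{N/2−1}(2ε(N−1) + (1−2ε)^{N/2})] / [2(1 + (N−1)(1−2ε)^{N/2})], with N = 2^{k+2}, has vanishing constant, linear, and quadratic terms, and cubic coefficient (1 − 3·2^{k+1} + 2^{2k+3})/3. -/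
/-!
Write `N = 2 (m + 1)`, so that `m = 2^(k+1) - 1`. The distillation function is `P / Q` for
polynomials `P`, `Q` with `Q(0) = 4 (m + 1) ≠ 0`. The derivatives of `P` at `0` are
binomial-type expressions in `m`, and they cancel up to order two, so `P` has a triple root
at `0` with `P'''(0) = 8 m (m + 1) (2 m + 1)`. Iterating the quotient rule, a triple root of the
numerator makes `(P / Q)(0)`, `(P / Q)'(0)` and `(P / Q)''(0)` vanish and gives
`(P / Q)'''(0) = P'''(0) / Q(0) = 2 m (2 m + 1)`. Finally
`m (2 m + 1) = (2^(k+1) - 1) (2^(k+2) - 1) = 1 - 3·2^(k+1) + 2^(2k+3)`.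
-/

open Polynomial Filter Topology

section QuotientDerivatives

variable {𝕜 : Type*} [NontriviallyNormedField 𝕜]

/-- The numerator of the `j`-th derivative of `p / q`, written over the denominator
`q ^ (j + 1)`. -/
noncomputable def quotientDerivNum (p q : 𝕜[X]) : ℕ → 𝕜[X]
  | 0 => p
  | j + 1 => derivative (quotientDerivNum p q j) * q -
      (j + 1 : 𝕜[X]) * quotientDerivNum p q j * derivative q

theorem hasDerivAt_eval_div_eval_pow (r q : 𝕜[X]) (j : ℕ) {x : 𝕜} (hq : q.eval x ≠ 0) :
    HasDerivAt (fun y => r.eval y / q.eval y ^ (j + 1))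
      ((derivative r * q - (j + 1 : 𝕜[X]) * r * derivative q).eval x / q.eval x ^ (j + 2)) x := by
  refine ((r.hasDerivAt x).div ((q.hasDerivAt x).pow (j + 1)) (pow_ne_zero _ hq)).congr_deriv ?_
  simp only [eval_sub, eval_mul, eval_add, eval_natCast, eval_one, Nat.cast_add, Nat.cast_one,
    add_tsub_cancel_right, Pi.pow_apply]
  field_simp
  ring

theorem iteratedDeriv_eval_div_eval_eventuallyEq (p q : 𝕜[X]) {x : 𝕜} (hq : q.eval x ≠ 0)
    (j : ℕ) :
    iteratedDeriv j (fun y => p.eval y / q.eval y) =ᶠ[𝓝 x]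
      fun y => (quotientDerivNum p q j).eval y / q.eval y ^ (j + 1) := by
  induction j with
  | zero => simp [quotientDerivNum]
  | succ j ih =>
    rw [iteratedDeriv_succ]
    refine ih.deriv.trans ?_
    filter_upwards [q.continuous.continuousAt.eventually_ne hq] with y hy
    exact (hasDerivAt_eval_div_eval_pow _ q j hy).deriv

theorem iteratedDeriv_eval_div_eval (p q : 𝕜[X]) {x : 𝕜} (hq : q.eval x ≠ 0) (j : ℕ) :
    iteratedDeriv j (fun y => p.eval y / q.eval y) x =
      (quotientDerivNum p q j).eval x / q.eval x ^ (j + 1) :=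
  (iteratedDeriv_eval_div_eval_eventuallyEq p q hq j).eq_of_nhds

theorem iteratedDeriv_eval_div_eval_of_triple_root (p q : 𝕜[X]) {x : 𝕜}
    (hq : q.eval x ≠ 0) (h₀ : p.eval x = 0) (h₁ : (derivative p).eval x = 0)
    (h₂ : (derivative^[2] p).eval x = 0) :
    iteratedDeriv 1 (fun y => p.eval y / q.eval y) x = 0 ∧
      iteratedDeriv 2 (fun y => p.eval y / q.eval y) x = 0 ∧
      iteratedDeriv 3 (fun y => p.eval y / q.eval y) x = (derivative^[3] p).eval x / q.eval x := by
  simp only [Function.iterate_succ_apply', Function.iterate_zero_apply] at h₂ ⊢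
  refine ⟨?_, ?_, ?_⟩
  · simp [iteratedDeriv_eval_div_eval p q hq, quotientDerivNum, h₀, h₁]
  · simp [iteratedDeriv_eval_div_eval p q hq, quotientDerivNum, h₀, h₁, h₂]
  · simp only [iteratedDeriv_eval_div_eval p q hq, quotientDerivNum, Nat.cast_zero, zero_add,
      one_mul, derivative_sub, derivative_mul, Nat.cast_one, derivative_add, derivative_one,
      add_zero, zero_mul, Nat.cast_ofNat, eval_sub, eval_mul, eval_add, h₂, h₁, h₀, sub_zero,
      sub_self, eval_one, mul_zero, eval_ofNat, Nat.reduceAdd]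
    field_simp

end QuotientDerivatives

theorem eval_zero_iterate_derivative_one_sub_C_mul_X_pow {R : Type*} [CommRing R] (a : R)
    (j : ℕ) :
    ∀ r : ℕ, (derivative^[j] ((1 - C a * X) ^ r)).eval 0 = r.descFactorial j * (-a) ^ j := by
  induction j with
  | zero => simp
  | succ j ih =>
    rintro (_ | r)
    · simp
    · have hderiv :
          derivative ((1 - C a * X) ^ (r + 1)) = C (-a * (r + 1)) * (1 - C a * X) ^ r := by
        simp only [derivative_pow, derivative_sub, derivative_one, derivative_C_mul_X, map_mul,
          map_neg, map_add, map_natCast, map_one, Nat.cast_add, Nat.cast_one,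
          add_tsub_cancel_right, zero_sub, mul_neg, neg_mul, neg_inj]
        ring
      rw [Function.iterate_succ_apply, hderiv, iterate_derivative_C_mul, eval_mul, eval_C, ih,
        Nat.succ_descFactorial_succ]
      push_cast
      ring

/-- The numerator of the distillation function for `N = 2 (m + 1)`; `distillationDen` is its
denominator. -/
noncomputable def distillationNum (m : ℕ) : ℝ[X] :=
  1 - (1 - 2 * X) ^ m * (2 * X * (2 * (m : ℝ[X]) + 1) + (1 - 2 * X) ^ (m + 1))

noncomputable def distillationDen (m : ℕ) : ℝ[X] :=
  2 * (1 + (2 * (m : ℝ[X]) + 1) * (1 - 2 * X) ^ (m + 1))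

theorem eval_zero_iterate_derivative_distillationNum (m j : ℕ) (hj : 0 < j) :
    (derivative^[j] (distillationNum m)).eval 0 =
      -(2 * (2 * m + 1) * j * m.descFactorial (j - 1) * (-2) ^ (j - 1)) -
        (2 * m + 1).descFactorial j * (-2) ^ j := by
  have hnum : distillationNum m =
      1 - C (2 * (2 * (m : ℝ) + 1)) * ((1 - C 2 * X) ^ m * X) - (1 - C 2 * X) ^ (2 * m + 1) := by
    simp only [distillationNum, map_mul, map_add, map_natCast, map_ofNat, map_one]
    ring
  rw [hnum, iterate_derivative_sub, iterate_derivative_sub, iterate_derivative_one hj,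
    iterate_derivative_C_mul, iterate_derivative_mul_X]
  simp only [nsmul_eq_mul, zero_sub, eval_sub, eval_neg, eval_mul, eval_C, eval_add,
    eval_natCast, eval_zero_iterate_derivative_one_sub_C_mul_X_pow, eval_X, mul_zero,
    zero_add]
  ring

theorem distillationNum_jet (m : ℕ) :
    (distillationNum m).eval 0 = 0 ∧ (derivative (distillationNum m)).eval 0 = 0 ∧
      (derivative^[2] (distillationNum m)).eval 0 = 0 ∧
      (derivative^[3] (distillationNum m)).eval 0 = 8 * m * (m + 1) * (2 * m + 1) := by
  refine ⟨by simp [distillationNum], ?_, ?_, ?_⟩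
  · rw [← Function.iterate_one derivative,
      eval_zero_iterate_derivative_distillationNum m 1 one_pos]
    simp only [Nat.sub_self, Nat.descFactorial_zero, Nat.descFactorial_one]
    push_cast
    ring
  · rw [eval_zero_iterate_derivative_distillationNum m 2 two_pos]
    simp only [Nat.reduceSub, Nat.descFactorial_one, Nat.cast_descFactorial_two]
    push_cast
    ring
  · rw [eval_zero_iterate_derivative_distillationNum m 3 three_pos]
    simp only [Nat.reduceSub, Nat.succ_descFactorial_succ, Nat.cast_mul,
      Nat.cast_descFactorial_two]
    push_cast
    ring

theorem eval_zero_distillationDen (m : ℕ) : (distillationDen m).eval 0 = 4 * (m + 1) := by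
  simp only [distillationDen, eval_mul, eval_ofNat, eval_add, eval_one, eval_natCast, eval_pow,
    eval_sub, eval_X, mul_zero, sub_zero, one_pow, mul_one]
  ring

theorem distillation_iteratedDeriv (m : ℕ) :
    let F := fun ε => (distillationNum m).eval ε / (distillationDen m).eval ε
    F 0 = 0 ∧ deriv F 0 = 0 ∧ iteratedDeriv 2 F 0 = 0 ∧
      iteratedDeriv 3 F 0 / 6 = m * (2 * m + 1) / 3 := by
  intro F
  obtain ⟨h₀, h₁, h₂, h₃⟩ := distillationNum_jet m
  have hden : (distillationDen m).eval 0 ≠ 0 := by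
    rw [eval_zero_distillationDen]
    positivity
  obtain ⟨d₁, d₂, d₃⟩ := iteratedDeriv_eval_div_eval_of_triple_root _ _ hden h₀ h₁ h₂
  refine ⟨by simp [F, h₀], by rwa [← iteratedDeriv_one], d₂, ?_⟩
  rw [d₃, h₃, eval_zero_distillationDen]
  field_simp
  ring

/-- The Taylor expansion of the distillation function at `ε = 0` has vanishing
constant, linear, and quadratic terms, and cubic coefficient
`(1 - 3·2^(k+1) + 2^(2k+3))/3`. -/
theorem distillation_taylor (k : ℕ)
    (f : ℝ → ℝ)
    (hf : f = fun ε =>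
      (1 - (1 - 2 * ε) ^ (2 ^ (k + 2) / 2 - 1) *
        (2 * ε * (2 ^ (k + 2) - 1) + (1 - 2 * ε) ^ (2 ^ (k + 2) / 2))) /
      (2 * (1 + (2 ^ (k + 2) - 1) * (1 - 2 * ε) ^ (2 ^ (k + 2) / 2)))) :
    f 0 = 0 ∧ deriv f 0 = 0 ∧ iteratedDeriv 2 f 0 = 0 ∧
      iteratedDeriv 3 f 0 / 6 =
        (1 - 3 * 2 ^ (k + 1) + 2 ^ (2 * k + 3) : ℝ) / 3 := by
  set m := 2 ^ (k + 1) - 1 with hm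
  have hexp : 2 ^ (k + 2) / 2 = m + 1 := by
    rw [pow_succ, Nat.mul_div_cancel _ two_pos, hm, Nat.sub_add_cancel Nat.one_le_two_pow]
  have hmR : (m : ℝ) = 2 ^ (k + 1) - 1 := by
    rw [hm, Nat.cast_sub Nat.one_le_two_pow]
    push_cast
    ring
  have hF : f = fun ε => (distillationNum m).eval ε / (distillationDen m).eval ε := by
    rw [hf, hexp, Nat.add_sub_cancel]
    funext ε
    simp only [distillationNum, distillationDen, eval_sub, eval_mul, eval_add, eval_pow, eval_one,
      eval_X, eval_ofNat, eval_natCast, hmR]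
    ring
  obtain ⟨h₀, h₁, h₂, h₃⟩ := distillation_iteratedDeriv m
  refine ⟨hF ▸ h₀, hF ▸ h₁, hF ▸ h₂, ?_⟩
  rw [hF, h₃, hmR]
  ring
end
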